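/- arXiv:1204.4377 — 3 statements merged into one kernel-verified Lean document; each statement's English description precedes it below -/
import Mathlib

section
/- For multiplicative characters A and B of F_q, (1/(q-1))·Σ_χ g(Aχ)·g(Bχ̄)·χ(-1), summed over all multiplicative characters χ, equals 0 if AB is nontrivial, and equals (q-1)·A(-1) if AB is trivial. -/
/-!
Expand both Gauss sums and sum over `χ` first: by orthogonality of characters only the pairs
`(x, y)` with `x = -y` survive, and there `θ x * θ y = 1`, which leaves
`(q - 1) * A (-1) * ∑ y, (A * B) y`.
-/

noncomputable instance {F : Type*} [Field F] [Fintype F] : Fintype (MulChar F ℂ) :=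
  Fintype.ofFinite _

namespace MulChar

section Orthogonality

variable {M R : Type*} [CommMonoid M] [Finite M] [CommRing R] [IsDomain R]
  [HasEnoughRootsOfUnity R (Monoid.exponent Mˣ)] [Fintype (MulChar M R)]

theorem sum_apply_eq_zero_of_ne_one {a : M} (ha : a ≠ 1) : ∑ χ : MulChar M R, χ a = 0 := by
  obtain ⟨χ, hχ⟩ := exists_apply_ne_one_of_hasEnoughRootsOfUnity M R ha
  refine eq_zero_of_mul_eq_self_left hχ ?_
  simpa only [Finset.mul_sum, ← mul_apply] using (Group.mulLeft_bijective χ).sum_comp (· a)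

theorem sum_apply_eq_ite [DecidableEq M] (a : M) :
    ∑ χ : MulChar M R, χ a = if a = 1 then (Nat.card Mˣ : R) else 0 := by
  split_ifs with ha
  · simp [ha, ← Nat.card_eq_fintype_card, card_eq_card_units_of_hasEnoughRootsOfUnity]
  · exact sum_apply_eq_zero_of_ne_one ha

end Orthogonality

variable {F R : Type*} [Field F] [Fintype F] [CommRing R] [IsDomain R]
  [HasEnoughRootsOfUnity R (Monoid.exponent Fˣ)] [Fintype (MulChar F R)]

theorem sum_mul_apply_mul_inv_apply [DecidableEq F] (A B : MulChar F R) (x y : F) :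
    ∑ χ : MulChar F R, (A * χ) x * (B * χ⁻¹) y * χ (-1) =
      if x = -y then Fintype.card Fˣ * (A (-1) * (A * B) y) else 0 := by
  rcases eq_or_ne y 0 with rfl | hy
  · simp
  have hx : ∀ χ : MulChar F R, (A * χ) x * (B * χ⁻¹) y * χ (-1) = A x * B y * χ (-x * y⁻¹) := by
    intro χ
    rw [show -x * y⁻¹ = x * y⁻¹ * -1 by ring, map_mul, map_mul, mul_apply, mul_apply, inv_apply']
    ring
  have hxy : -x * y⁻¹ = 1 ↔ x = -y := by
    rw [mul_inv_eq_one₀ hy, neg_eq_iff_eq_neg]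
  simp only [hx, ← Finset.mul_sum, sum_apply_eq_ite, hxy, Nat.card_eq_fintype_card]
  split_ifs with h
  · subst h
    rw [mul_apply, ← neg_one_mul y, map_mul]
    ring
  · simp

theorem sum_gaussSum_mul_gaussSum_mul_apply_neg_one [DecidableEq F] (A B : MulChar F R)
    (ψ : AddChar F R) :
    ∑ χ : MulChar F R, gaussSum (A * χ) ψ * gaussSum (B * χ⁻¹) ψ * χ (-1) =
      Fintype.card Fˣ * A (-1) * ∑ y, (A * B) y := by
  have hψ (y : F) : ψ (-y) * ψ y = 1 := by
    rw [← AddChar.map_add_eq_mul, neg_add_cancel, AddChar.map_zero_eq_one]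
  calc ∑ χ : MulChar F R, gaussSum (A * χ) ψ * gaussSum (B * χ⁻¹) ψ * χ (-1)
      = ∑ y, ∑ x, ψ x * ψ y * ∑ χ : MulChar F R, (A * χ) x * (B * χ⁻¹) y * χ (-1) := by
        simp only [gaussSum, Finset.sum_mul, Finset.mul_sum]
        refine Finset.sum_comm_cycle.symm.trans ?_
        exact Finset.sum_congr rfl fun y _ ↦ Finset.sum_congr rfl fun x _ ↦
          Finset.sum_congr rfl fun χ _ ↦ by ring
    _ = ∑ y, Fintype.card Fˣ * A (-1) * (A * B) y := by
        simp only [sum_mul_apply_mul_inv_apply, mul_ite, mul_zero, Finset.sum_ite_eq',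
          Finset.mem_univ, if_true, ← mul_assoc, hψ, one_mul]
    _ = Fintype.card Fˣ * A (-1) * ∑ y, (A * B) y := by rw [Finset.mul_sum]

end MulChar

open scoped Classical in
theorem sum_gaussSum_mul_gaussSum_general {F : Type*} [Field F] [Fintype F]
    (θ : AddChar F ℂ) (A B : MulChar F ℂ) :
    (1 / ((Fintype.card F : ℂ) - 1)) *
      ∑ χ : MulChar F ℂ, gaussSum (A * χ) θ * gaussSum (B * χ⁻¹) θ * χ (-1) =
    if A * B = 1 then ((Fintype.card F : ℂ) - 1) * A (-1) else 0 := by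
  have hq : (Fintype.card F : ℂ) - 1 ≠ 0 :=
    sub_ne_zero.mpr (by exact_mod_cast Fintype.one_lt_card.ne')
  have hunits : (Fintype.card Fˣ : ℂ) = Fintype.card F - 1 := by
    rw [Fintype.card_units, Nat.cast_sub Fintype.card_pos, Nat.cast_one]
  rw [MulChar.sum_gaussSum_mul_gaussSum_mul_apply_neg_one, hunits]
  split_ifs with hAB
  · rw [hAB, MulChar.sum_one_eq_card_units, hunits]
    field_simp
  · rw [MulChar.sum_eq_zero_of_ne_one hAB, mul_zero, mul_zero]

open scoped Classical in
theorem sum_gaussSum_mul_gaussSum {F : Type*} [Field F] [Fintype F]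
    (θ : AddChar F ℂ) (hθ : θ ≠ 1) (A B : MulChar F ℂ) :
    (1 / ((Fintype.card F : ℂ) - 1)) *
      ∑ χ : MulChar F ℂ, gaussSum (A * χ) θ * gaussSum (B * χ⁻¹) θ * χ (-1) =
    if A * B = 1 then ((Fintype.card F : ℂ) - 1) * A (-1) else 0 :=
  sum_gaussSum_mul_gaussSum_general θ A B
end

section
/- (Finite field Gauss summation) For multiplicative characters A, B, C of F_q with AB ≠ C, the finite field hypergeometric function 2F1*(A,B;C | 1)_q equals g(AC̄)·g(BC̄) / (g(C̄)·g(ABC̄)). -/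
/-- The finite field hypergeometric function `ₙ₊₁Fₙ*` of McCarthy. -/
noncomputable def hypF {F : Type*} [Field F] [Fintype F] (θ : AddChar F ℂ) {n : ℕ}
    (A : Fin (n + 1) → MulChar F ℂ) (B : Fin n → MulChar F ℂ) (x : F) : ℂ :=
  (1 / ((Fintype.card F : ℂ) - 1)) *
    ∑ χ : MulChar F ℂ,
      (∏ i, gaussSum (A i * χ) θ / gaussSum (A i) θ) *
        (∏ j, gaussSum (B j * χ)⁻¹ θ / gaussSum (B j)⁻¹ θ) *
        gaussSum χ⁻¹ θ * (χ (-1)) ^ (n + 1) * χ x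

/-!
Expand the four Gauss sums `g(Aχ) g(Bχ) g((Cχ)⁻¹) g(χ⁻¹)` and rescale the first, second and
fourth summation variables by the third one, `z`; the characters `χ` then only occur as
`χ(u) χ(v) χ⁻¹(t)`, and orthogonality forces `t = uv`. What remains is
`(q - 1) ∑_{u,v,z} A(u) B(v) D(z) θ(z (1 + u) (1 + v))` with `D = A B C⁻¹ ≠ 1`, whose `z`-sum is
`g(D) D⁻¹((1 + u)(1 + v))`. The sum thus splits into the two Jacobi-type sums
`∑_u E(u) D⁻¹(1 + u)` for `E = A, B`, and each of them equals `g(E) g(E⁻¹ D) / g(D)`.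
-/

open Finset

section

variable {F : Type*} [Field F] [Fintype F]

theorem MulChar.sum_apply_eq_ite_s8 [DecidableEq F] (a : F) :
    ∑ χ : MulChar F ℂ, χ a = if a = 1 then (Fintype.card F : ℂ) - 1 else 0 := by
  split_ifs with ha
  · have hcard := MulChar.card_eq_card_units_of_hasEnoughRootsOfUnity F ℂ
    rw [Nat.card_eq_fintype_card, Nat.card_eq_fintype_card, Fintype.card_units] at hcard
    simp [ha, hcard, Nat.cast_sub Fintype.card_pos]
  · obtain ⟨χ, hχ⟩ := MulChar.exists_apply_ne_one_of_hasEnoughRootsOfUnity F ℂ ha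
    refine eq_zero_of_mul_eq_self_left hχ ?_
    simp only [Finset.mul_sum, ← MulChar.mul_apply]
    exact Fintype.sum_bijective _ (Group.mulLeft_bijective χ) _ _ fun _ ↦ rfl

theorem MulChar.sum_apply_mul_inv_apply [DecidableEq F] {a : F} (ha : a ≠ 0) (b : F) :
    ∑ χ : MulChar F ℂ, χ a * χ⁻¹ b = if a = b then (Fintype.card F : ℂ) - 1 else 0 := by
  simp_rw [MulChar.inv_apply', ← map_mul, MulChar.sum_apply_eq_ite_s8]
  rcases eq_or_ne b 0 with rfl | hb
  · simp [ha]
  · simp [mul_inv_eq_one₀ hb]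

theorem gaussSum_ne_zero_of_addChar_ne_one {θ : AddChar F ℂ} (hθ : θ ≠ 1) (χ : MulChar F ℂ) :
    gaussSum χ θ ≠ 0 := by
  rcases eq_or_ne χ 1 with rfl | hχ
  · simp [gaussSum_one_left hθ]
  · exact gaussSum_ne_zero_of_nontrivial (by simp) hχ (AddChar.IsPrimitive.of_ne_one hθ)

section

variable {R : Type*} [CommRing R]

theorem gaussSum_mul_gaussSum_mul_gaussSum_mul_gaussSum_eq_sum_mulShift (X Y W Z : MulChar F R)
    (ψ : AddChar F R) :
    gaussSum X ψ * gaussSum Y ψ * gaussSum W ψ * gaussSum Z ψ =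
      ∑ z, (X * Y * W * Z) z * ψ z *
        (gaussSum X (ψ.mulShift z) * gaussSum Y (ψ.mulShift z) * gaussSum W (ψ.mulShift z)) := by
  rw [gaussSum.eq_1 Z, Finset.mul_sum]
  refine sum_congr rfl fun z _ ↦ ?_
  rcases eq_or_ne z 0 with rfl | hz
  · simp [Z.map_nonunit not_isUnit_zero]
  · have hscale (χ : MulChar F R) : gaussSum χ ψ = χ z * gaussSum χ (ψ.mulShift z) :=
      (gaussSum_mulShift χ ψ (Units.mk0 z hz)).symm
    rw [hscale X, hscale Y, hscale W]
    simp only [MulChar.mul_apply]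
    ring

variable [IsDomain R]

theorem gaussSum_mulShift_eq_of_ne_one {χ : MulChar F R} (hχ : χ ≠ 1) (ψ : AddChar F R) (c : F) :
    gaussSum χ (ψ.mulShift c) = χ⁻¹ c * gaussSum χ ψ := by
  rcases eq_or_ne c 0 with rfl | hc
  · simp [gaussSum_one_right hχ, MulChar.map_zero]
  · simpa using gaussSum_mulShift_eq χ ψ (Units.mk0 c hc)

theorem gaussSum_mul_sum_apply_mul_inv_apply_one_add {D : MulChar F R} (hD : D ≠ 1)
    (E : MulChar F R) (ψ : AddChar F R) :
    gaussSum D ψ * ∑ u, E u * D⁻¹ (1 + u) = gaussSum E ψ * gaussSum (E⁻¹ * D) ψ := by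
  calc gaussSum D ψ * ∑ u, E u * D⁻¹ (1 + u)
      = ∑ u, E u * gaussSum D (ψ.mulShift (1 + u)) := by
        simp_rw [gaussSum_mulShift_eq_of_ne_one hD, Finset.mul_sum]
        exact sum_congr rfl fun _ _ ↦ by ring
    _ = ∑ z, D z * ψ z * gaussSum E (ψ.mulShift z) := by
        simp only [gaussSum, AddChar.mulShift_apply, Finset.mul_sum]
        rw [Finset.sum_comm]
        refine sum_congr rfl fun z _ ↦ sum_congr rfl fun u _ ↦ ?_
        rw [add_mul, one_mul, AddChar.map_add_eq_mul, mul_comm u z]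
        ring
    _ = ∑ z, (E⁻¹ * D) z * ψ z * gaussSum E ψ := by
        refine sum_congr rfl fun z _ ↦ ?_
        rcases eq_or_ne z 0 with rfl | hz
        · simp [MulChar.map_zero]
        · rw [← Units.val_mk0 hz, gaussSum_mulShift_eq, MulChar.mul_apply]
          ring
    _ = gaussSum E ψ * gaussSum (E⁻¹ * D) ψ := by
        rw [← Finset.sum_mul, mul_comm]
        rfl

end
theorem sum_gaussSum_mul_gaussSum_mul_gaussSum_inv (A B : MulChar F ℂ) (ψ : AddChar F ℂ) :
    ∑ χ : MulChar F ℂ, gaussSum (A * χ) ψ * gaussSum (B * χ) ψ * gaussSum χ⁻¹ ψ =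
      ((Fintype.card F : ℂ) - 1) * ∑ u, ∑ v, A u * B v * ψ (u + v + u * v) := by
  classical
  calc ∑ χ : MulChar F ℂ, gaussSum (A * χ) ψ * gaussSum (B * χ) ψ * gaussSum χ⁻¹ ψ
      = ∑ χ : MulChar F ℂ, ∑ u, ∑ v, ∑ t, A u * B v * ψ (u + v + t) * (χ (u * v) * χ⁻¹ t) := by
        refine sum_congr rfl fun χ _ ↦ ?_
        rw [gaussSum, gaussSum, gaussSum, Finset.sum_mul_sum]
        simp only [Finset.sum_mul]
        simp only [Finset.mul_sum]
        refine sum_congr rfl fun u _ ↦ sum_congr rfl fun v _ ↦ sum_congr rfl fun t _ ↦ ?_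
        simp only [MulChar.mul_apply, map_mul, AddChar.map_add_eq_mul]
        ring
    _ = ∑ u, ∑ v, ∑ t, A u * B v * ψ (u + v + t) * ∑ χ : MulChar F ℂ, χ (u * v) * χ⁻¹ t := by
        simp only [Finset.mul_sum]
        rw [Finset.sum_comm]
        refine sum_congr rfl fun u _ ↦ ?_
        rw [Finset.sum_comm]
        exact sum_congr rfl fun v _ ↦ Finset.sum_comm
    _ = ∑ u, ∑ v, ((Fintype.card F : ℂ) - 1) * (A u * B v * ψ (u + v + u * v)) := by
        refine sum_congr rfl fun u _ ↦ sum_congr rfl fun v _ ↦ ?_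
        rcases eq_or_ne (u * v) 0 with huv | huv
        · rcases mul_eq_zero.mp huv with rfl | rfl <;> simp [MulChar.map_zero]
        · simp_rw [MulChar.sum_apply_mul_inv_apply huv, mul_ite, mul_zero, Finset.sum_ite_eq]
          simp only [mem_univ, if_true]
          ring
    _ = ((Fintype.card F : ℂ) - 1) * ∑ u, ∑ v, A u * B v * ψ (u + v + u * v) := by
        simp only [Finset.mul_sum]

theorem sum_gaussSum_mul_gaussSum_mul_gaussSum_inv_mul_gaussSum_inv {A B C : MulChar F ℂ}
    (h : A * B ≠ C) (ψ : AddChar F ℂ) :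
    ∑ χ : MulChar F ℂ,
        gaussSum (A * χ) ψ * gaussSum (B * χ) ψ * gaussSum (C * χ)⁻¹ ψ * gaussSum χ⁻¹ ψ =
      ((Fintype.card F : ℂ) - 1) * gaussSum (A * B * C⁻¹) ψ *
        (∑ u, A u * (A * B * C⁻¹)⁻¹ (1 + u)) * ∑ v, B v * (A * B * C⁻¹)⁻¹ (1 + v) := by
  set D := A * B * C⁻¹
  have hD : D ≠ 1 := fun hD ↦ h (mul_inv_eq_one.mp hD)
  calc ∑ χ : MulChar F ℂ,
        gaussSum (A * χ) ψ * gaussSum (B * χ) ψ * gaussSum (C * χ)⁻¹ ψ * gaussSum χ⁻¹ ψ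
      = ∑ χ : MulChar F ℂ, ∑ z, D z * ψ z * (gaussSum (A * χ) (ψ.mulShift z) *
          gaussSum (B * χ) (ψ.mulShift z) * gaussSum χ⁻¹ (ψ.mulShift z)) := by
        refine sum_congr rfl fun χ _ ↦ ?_
        rw [mul_right_comm, gaussSum_mul_gaussSum_mul_gaussSum_mul_gaussSum_eq_sum_mulShift]
        congr! 4
        calc A * χ * (B * χ) * χ⁻¹ * (C * χ)⁻¹ = A * B * C⁻¹ * (χ * χ * χ⁻¹ * χ⁻¹) := by
              rw [mul_inv]; ac_rfl
          _ = D := by rw [mul_inv_cancel_right, mul_inv_cancel, mul_one]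
    _ = ((Fintype.card F : ℂ) - 1) *
          ∑ u, ∑ v, A u * B v * ∑ z, D z * ψ ((1 + u) * (1 + v) * z) := by
        rw [Finset.sum_comm]
        simp_rw [← Finset.mul_sum, sum_gaussSum_mul_gaussSum_mul_gaussSum_inv,
          AddChar.mulShift_apply, Finset.mul_sum]
        rw [Finset.sum_comm]
        refine sum_congr rfl fun u _ ↦ ?_
        rw [Finset.sum_comm]
        refine sum_congr rfl fun v _ ↦ sum_congr rfl fun z _ ↦ ?_
        have hψ : ψ ((1 + u) * (1 + v) * z) = ψ z * ψ (z * (u + v + u * v)) := by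
          rw [← AddChar.map_add_eq_mul]
          ring_nf
        rw [hψ]
        ring
    _ = _ := by
        have htwist (c : F) : ∑ z, D z * ψ (c * z) = D⁻¹ c * gaussSum D ψ :=
          gaussSum_mulShift_eq_of_ne_one hD ψ c
        simp_rw [htwist, map_mul]
        rw [mul_assoc _ (∑ u, _), Finset.sum_mul_sum]
        simp only [Finset.mul_sum]
        exact sum_congr rfl fun u _ ↦ sum_congr rfl fun v _ ↦ by ring

theorem hypF_2F1_eq_sum_div (θ : AddChar F ℂ) (A B C : MulChar F ℂ) (x : F) :
    hypF θ ![A, B] ![C] x =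
      (∑ χ : MulChar F ℂ, gaussSum (A * χ) θ * gaussSum (B * χ) θ * gaussSum (C * χ)⁻¹ θ *
          gaussSum χ⁻¹ θ * χ x) /
        (((Fintype.card F : ℂ) - 1) * (gaussSum A θ * gaussSum B θ * gaussSum C⁻¹ θ)) := by
  rw [hypF, Finset.sum_div, Finset.mul_sum]
  refine sum_congr rfl fun χ _ ↦ ?_
  have hsq : χ (-1) ^ (1 + 1) = 1 := by rw [← map_pow, neg_one_sq, map_one]
  simp only [Fin.prod_univ_succ, Fin.prod_univ_zero, Matrix.cons_val_zero, Matrix.cons_val_succ,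
    mul_one, hsq, div_eq_mul_inv, mul_inv]
  ring

end

theorem hypF_2F1_gauss_summation {F : Type*} [Field F] [Fintype F]
    (θ : AddChar F ℂ) (hθ : θ ≠ 1) (A B C : MulChar F ℂ) (h : A * B ≠ C) :
    hypF θ ![A, B] ![C] (1 : F) =
      gaussSum (A * C⁻¹) θ * gaussSum (B * C⁻¹) θ /
        (gaussSum C⁻¹ θ * gaussSum (A * B * C⁻¹) θ) := by
  have hD : A * B * C⁻¹ ≠ 1 := fun hD ↦ h (mul_inv_eq_one.mp hD)
  have hA := gaussSum_mul_sum_apply_mul_inv_apply_one_add hD A θ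
  have hB := gaussSum_mul_sum_apply_mul_inv_apply_one_add hD B θ
  rw [show A⁻¹ * (A * B * C⁻¹) = B * C⁻¹ by rw [mul_assoc, inv_mul_cancel_left]] at hA
  rw [show B⁻¹ * (A * B * C⁻¹) = A * C⁻¹ by
    rw [mul_comm A B, mul_assoc, inv_mul_cancel_left]] at hB
  have hq : (Fintype.card F : ℂ) - 1 ≠ 0 :=
    sub_ne_zero.mpr (by exact_mod_cast Fintype.one_lt_card.ne')
  have := gaussSum_ne_zero_of_addChar_ne_one hθ A
  have := gaussSum_ne_zero_of_addChar_ne_one hθ B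
  have := gaussSum_ne_zero_of_addChar_ne_one hθ C⁻¹
  have := gaussSum_ne_zero_of_addChar_ne_one hθ (A * B * C⁻¹)
  simp only [hypF_2F1_eq_sum_div, map_one, mul_one,
    sum_gaussSum_mul_gaussSum_mul_gaussSum_inv_mul_gaussSum_inv h]
  field_simp
  linear_combination (gaussSum (A * B * C⁻¹) θ * ∑ v, B v * (A * B * C⁻¹)⁻¹ (1 + v)) * hA +
    gaussSum A θ * gaussSum (B * C⁻¹) θ * hB
end

section
/- For multiplicative characters A, B, C of F_q in the degenerate case A = B = C = ε: 3F2*(ε,ε,ε; ε,ε | 1)_q = -q³ + q² + q + 1. -/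
open Finset

lemma Fintype.sum_ite_eq_one {G : Type*} [Fintype G] [DecidableEq G] [One G] {R : Type*}
    [Ring R] (a b : R) :
    ∑ g : G, (if g = 1 then a else b) = a + ((Fintype.card G : R) - 1) * b := by
  rw [Fintype.sum_eq_add_sum_compl 1, if_pos rfl,
    Finset.sum_congr rfl fun g hg ↦ if_neg (by simpa using hg), sum_const, card_compl,
    card_singleton, nsmul_eq_mul, Nat.cast_sub Fintype.card_pos, Nat.cast_one]

lemma MulChar.card_add_one (M : Type*) [CommGroupWithZero M] [Finite M] (R : Type*)
    [CommRing R] [HasEnoughRootsOfUnity R (Monoid.exponent Mˣ)] :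
    Nat.card (MulChar M R) + 1 = Nat.card M := by
  rw [MulChar.card_eq_card_units_of_hasEnoughRootsOfUnity, Nat.card_eq_card_units_add_one M]

section

variable {F : Type*} [Field F] [Fintype F] {R : Type*} [CommRing R] [IsDomain R]

lemma gaussSum_mul_gaussSum_inv {χ : MulChar F R} (hχ : χ ≠ 1) {ψ : AddChar F R}
    (hψ : ψ.IsPrimitive) :
    gaussSum χ ψ * gaussSum χ⁻¹ ψ = χ (-1) * Fintype.card F := by
  rw [← mul_gaussSum_inv_eq_gaussSum χ⁻¹, mul_left_comm, gaussSum_mul_gaussSum_eq_card hχ hψ,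
    MulChar.inv_apply', inv_neg_one]

open Classical in
lemma gaussSum_mul_gaussSum_inv_mul_apply_neg_one (χ : MulChar F R) {ψ : AddChar F R}
    (hψ : ψ ≠ 1) :
    gaussSum χ ψ * gaussSum χ⁻¹ ψ * χ (-1) = if χ = 1 then 1 else (Fintype.card F : R) := by
  split_ifs with hχ
  · simp only [hχ, inv_one, gaussSum_one_left hψ, MulChar.one_apply isUnit_one.neg]
    norm_num
  · rw [gaussSum_mul_gaussSum_inv hχ (AddChar.IsPrimitive.of_ne_one hψ), mul_right_comm,
      ← map_mul, neg_one_mul, neg_neg, map_one, one_mul]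

open Classical in
lemma hypF_one_one_eq {θ : AddChar F ℂ} (hθ : θ ≠ 1) (n : ℕ) (x : F) :
    hypF θ (fun _ : Fin (n + 1) ↦ 1) (fun _ ↦ 1) x =
      1 / ((Fintype.card F : ℂ) - 1) *
        ∑ χ : MulChar F ℂ, -(if χ = 1 then 1 else (Fintype.card F : ℂ) ^ (n + 1)) * χ x := by
  rw [hypF]
  congr 1
  refine sum_congr rfl fun χ _ ↦ ?_
  have hterm := gaussSum_mul_gaussSum_inv_mul_apply_neg_one χ hθ
  simp only [one_mul, inv_one, gaussSum_one_left hθ, prod_const, card_univ, Fintype.card_fin]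
  calc _ = (-1) ^ (2 * n + 1) * (gaussSum χ θ * gaussSum χ⁻¹ θ * χ (-1)) ^ (n + 1) * χ x := by
          ring
    _ = _ := by rw [hterm, pow_succ, pow_mul, neg_one_sq, one_pow]; split_ifs <;> simp

lemma hypF_one_one_apply_one {θ : AddChar F ℂ} (hθ : θ ≠ 1) (n : ℕ) :
    hypF θ (fun _ : Fin (n + 1) ↦ 1) (fun _ ↦ 1) 1 =
      -(1 + ((Fintype.card F : ℂ) - 2) * (Fintype.card F : ℂ) ^ (n + 1)) /
        ((Fintype.card F : ℂ) - 1) := by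
  classical
  have hcard : (Fintype.card (MulChar F ℂ) : ℂ) = Fintype.card F - 1 := by
    rw [eq_sub_iff_add_eq, ← Nat.card_eq_fintype_card, ← Nat.card_eq_fintype_card,
      ← MulChar.card_add_one F ℂ, Nat.cast_add_one]
  simp only [hypF_one_one_eq hθ, map_one, mul_one, sum_neg_distrib, Fintype.sum_ite_eq_one, hcard]
  ring

end

/-- Degenerate case `A = B = C = ε` of the `₃F₂*` evaluation. -/
theorem hypF_3F2_all_trivial {F : Type*} [Field F] [Fintype F]
    (θ : AddChar F ℂ) (hθ : θ ≠ 1) :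
    hypF θ ![(1 : MulChar F ℂ), 1, 1] ![1, 1] (1 : F) =
      -(Fintype.card F : ℂ) ^ 3 + (Fintype.card F : ℂ) ^ 2 + (Fintype.card F : ℂ) + 1 := by
  have hA : ![(1 : MulChar F ℂ), 1, 1] = fun _ ↦ 1 := by funext i; fin_cases i <;> rfl
  have hB : ![(1 : MulChar F ℂ), 1] = fun _ ↦ 1 := by funext i; fin_cases i <;> rfl
  have hq : (Fintype.card F : ℂ) - 1 ≠ 0 :=
    sub_ne_zero.2 (by exact_mod_cast Fintype.one_lt_card.ne')
  rw [hA, hB, hypF_one_one_apply_one hθ 2, div_eq_iff hq]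
  ring
end
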